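/- Let (A,φ) and (B,ψ) be PCAs over Set and let f: (A,φ) → (B,ψ) be an applicative morphism. Then f is computationally dense if and only if f is quasi-surjective. -/

import Mathlib

open CategoryTheory

namespace PcaPaper

/-- A partial binary application on `A`. -/
abbrev PApp (A : Type) := A → A → Option A

variable {A B C : Type}

/-- Definedness of the application of inhabited subsets. -/
def SubDef (app : PApp A) (U V : Set A) : Prop :=
  ∀ a ∈ U, ∀ b ∈ V, (app a b).isSome

/-- Application of subsets. -/
def SubApp (app : PApp A) (U V : Set A) : Set A :=
  {c | ∃ a ∈ U, ∃ b ∈ V, app a b = some c}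

/-- Terms with `n` variables, built from variables by application. -/
inductive Term (n : ℕ) : Type
  | var : Fin n → Term n
  | op : Term n → Term n → Term n

/-- Evaluation of a term at a vector of elements, as a partial function. -/
def Term.eval (app : PApp A) : {n : ℕ} → Term n → (Fin n → A) → Option A
  | _, .var i, ρ => some (ρ i)
  | _, .op s t, ρ => (Term.eval app s ρ).bind fun x => (Term.eval app t ρ).bind fun y => app x y

/-- Evaluation of a term at a vector of subsets. -/
def Term.subEval (app : PApp A) : {n : ℕ} → Term n → (Fin n → Set A) → Set A
  | _, .var i, ρ => ρ i
  | _, .op s t, ρ => SubApp app (Term.subEval app s ρ) (Term.subEval app t ρ)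

/-- Definedness of the evaluation of a term at a vector of subsets. -/
def Term.subDef (app : PApp A) : {n : ℕ} → Term n → (Fin n → Set A) → Prop
  | _, .var _, _ => True
  | _, .op s t, ρ => Term.subDef app s ρ ∧ Term.subDef app t ρ ∧
      SubDef app (Term.subEval app s ρ) (Term.subEval app t ρ)

/-- `r · a 0 · … · a (k-1)`, associated to the left. -/
def appVec (app : PApp A) (r : A) : (k : ℕ) → (Fin k → A) → Option A
  | 0, _ => some r
  | k + 1, a => (appVec app r k fun i => a i.castSucc).bind fun s => app s (a (Fin.last k))

/-- `U` realizes `λ x₀ … xₙ. t`. -/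
def Realizes (app : PApp A) (U : Set A) {n : ℕ} (t : Term (n + 1)) : Prop :=
  ∀ r ∈ U, ∀ a : Fin (n + 1) → A,
    (appVec app r n fun i => a i.castSucc).isSome ∧
    ∀ b, Term.eval app t a = some b → appVec app r (n + 1) a = some b

/-- A filter of inhabited subsets on a partial applicative structure. -/
structure IsPcaFilter (app : PApp A) (φ : Set (Set A)) : Prop where
  nonempty : ∀ U ∈ φ, U.Nonempty
  upward : ∀ U ∈ φ, ∀ V : Set A, U ⊆ V → V ∈ φ
  appClosed : ∀ U ∈ φ, ∀ V ∈ φ, SubDef app U V → SubApp app U V ∈ φ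

/-- Combinatorial completeness of a set of subsets. -/
def CombComplete (app : PApp A) (G : Set (Set A)) : Prop :=
  ∀ (n : ℕ) (t : Term (n + 1)), ∃ U ∈ G, Realizes app U t

/-- The least filter containing `G`. -/
def genFilter (app : PApp A) (G : Set (Set A)) : Set (Set A) :=
  ⋂₀ {ψ | IsPcaFilter app ψ ∧ G ⊆ ψ}

/-- A (relative) PCA over the base category `Set`: a nonempty set with a partial
binary application and a combinatorially complete filter of inhabited subsets. -/
structure PCA (A : Type) where
  app : PApp A
  nonemptyCarrier : Nonempty A
  filt : Set (Set A)
  isFilter : IsPcaFilter app filt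
  complete : CombComplete app filt

/- ### Helper lemmas -/

lemma isSome_bind_left {α β : Type} {o : Option α} {f : α → Option β}
    (h : (o.bind f).isSome) : o.isSome := by
  cases o <;> simp_all

lemma appVec_two_pre (app : PApp A) (r u v x : A) :
    (appVec app r 2 fun i => (![u, v, x] : Fin 3 → A) i.castSucc)
      = (app r u).bind fun s => app s v := rfl

lemma appVec_three_cons (app : PApp A) (r u v x : A) :
    appVec app r (2 + 1) ![u, v, x]
      = ((app r u).bind fun s => app s v).bind fun s => app s x := rfl

lemma eval_comp_term (app : PApp A) (u v x : A) :
    Term.eval app (Term.op (.var 1) (.op (.var 0) (.var 2))) ![u, v, x]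
      = (app u x).bind fun y => app v y := by
  simp [Term.eval]

lemma eval_app2_term (app : PApp A) (u v x : A) :
    Term.eval app (Term.op (.op (.var 0) (.var 1)) (.var 2)) ![u, v, x]
      = (app u v).bind fun d => app d x := by
  simp [Term.eval]

lemma filt_nonempty (P : PCA A) : ∃ U, U ∈ P.filt := by
  obtain ⟨U, hU, -⟩ := P.complete 0 (.var 0)
  exact ⟨U, hU⟩

lemma univ_mem_filt (P : PCA A) : (Set.univ : Set A) ∈ P.filt := by
  obtain ⟨U, hU⟩ := filt_nonempty P
  exact P.isFilter.upward U hU _ (Set.subset_univ U)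

lemma exists_ireal (P : PCA A) :
    ∃ U ∈ P.filt, ∀ r ∈ U, ∀ a : A, P.app r a = some a := by
  obtain ⟨U, hU, hreal⟩ := P.complete 0 (.var 0)
  refine ⟨U, hU, fun r hr a => ?_⟩
  have h := (hreal r hr fun _ => a).2 a (by simp [Term.eval])
  simpa [appVec] using h

lemma realizes3_chain (P : PCA A) {T : Set A} {t : Term (2 + 1)}
    (hreal : Realizes P.app T t) {r : A} (hr : r ∈ T) (u v : A) :
    ∃ s w, P.app r u = some s ∧ P.app s v = some w := by
  have h1 : ((P.app r u).bind fun s => P.app s v).isSome := by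
    have h := (hreal r hr ![u, v, v]).1
    rwa [appVec_two_pre] at h
  cases hru : P.app r u with
  | none => rw [hru] at h1; simp at h1
  | some s =>
    rw [hru] at h1
    simp only [Option.bind_some] at h1
    obtain ⟨w, hw⟩ := Option.isSome_iff_exists.mp h1
    exact ⟨s, w, rfl, hw⟩

lemma exists_tracker3 (P : PCA A) (t : Term (2 + 1)) {U V : Set A}
    (hU : U ∈ P.filt) (hV : V ∈ P.filt) :
    ∃ W ∈ P.filt, ∀ w ∈ W, ∃ u ∈ U, ∃ v ∈ V,
      ∀ x c : A, Term.eval P.app t ![u, v, x] = some c → P.app w x = some c := by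
  obtain ⟨T, hT, hreal⟩ := P.complete 2 t
  have hdef1 : SubDef P.app T U := by
    intro r hr u _
    obtain ⟨s, w, hs, -⟩ := realizes3_chain P hreal hr u u
    simp [hs]
  have hTU := P.isFilter.appClosed T hT U hU hdef1
  have hdef2 : SubDef P.app (SubApp P.app T U) V := by
    rintro s ⟨r, hr, u, hu, hru⟩ v _
    obtain ⟨s', w, hs', hw⟩ := realizes3_chain P hreal hr u v
    rw [hru] at hs'
    injection hs' with h
    subst h
    simp [hw]
  refine ⟨SubApp P.app (SubApp P.app T U) V,
    P.isFilter.appClosed _ hTU V hV hdef2, ?_⟩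
  rintro w ⟨s, ⟨r, hr, u, hu, hru⟩, v, hv, hsv⟩
  refine ⟨u, hu, v, hv, fun x c hc => ?_⟩
  have h2 : appVec P.app r (2 + 1) ![u, v, x] = some c := (hreal r hr ![u, v, x]).2 c hc
  rw [appVec_three_cons, hru] at h2
  simp only [Option.bind_some] at h2
  rw [hsv] at h2
  simpa using h2

/- ### Assemblies -/

/-- An assembly over a PCA `(A, φ)`. -/
structure Asm {A : Type} (P : PCA A) : Type 1 where
  carrier : Type
  E : carrier → A → Prop
  total : ∀ x, ∃ a, E x a

/-- `U` tracks the function `f` between (the carriers of) two assemblies. -/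
def Tracks (P : PCA A) {X Y : Asm P} (U : Set A) (f : X.carrier → Y.carrier) : Prop :=
  ∀ x a r, X.E x a → r ∈ U → ∃ b, P.app r a = some b ∧ Y.E (f x) b

/-- The category of assemblies over a PCA. -/
instance asmCategory (P : PCA A) : Category (Asm P) where
  Hom X Y := {f : X.carrier → Y.carrier // ∃ U ∈ P.filt, Tracks P U f}
  id X := ⟨fun x => x, by
    obtain ⟨U, hU, hI⟩ := exists_ireal P
    exact ⟨U, hU, fun x a r hx hr => ⟨a, hI r hr a, hx⟩⟩⟩
  comp {X Y Z} f g := ⟨fun x => g.1 (f.1 x), by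
    obtain ⟨U, hU, hf⟩ := f.2
    obtain ⟨V, hV, hg⟩ := g.2
    obtain ⟨W, hW, hkey⟩ := exists_tracker3 P
      (Term.op (.var 1) (.op (.var 0) (.var 2))) hU hV
    refine ⟨W, hW, fun x a w hx hw => ?_⟩
    obtain ⟨u, hu, v, hv, key⟩ := hkey w hw
    obtain ⟨b, hb, hYb⟩ := hf x a u hx hu
    obtain ⟨c, hc, hZc⟩ := hg (f.1 x) b v hYb hv
    refine ⟨c, key a c ?_, hZc⟩
    rw [eval_comp_term, hb]
    simpa using hc⟩
  id_comp f := Subtype.ext rfl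
  comp_id f := Subtype.ext rfl
  assoc f g h := Subtype.ext rfl

/-- The global-sections-like functor `Γ : Asm(A,φ) ⥤ Set`. -/
def Gam (P : PCA A) : Asm P ⥤ Type where
  obj X := X.carrier
  map f := TypeCat.ofHom f.1
  map_id _ := rfl
  map_comp _ _ := rfl

/-- The constant-object assembly `∇ Y`. -/
def nablaObj (P : PCA A) (Y : Type) : Asm P where
  carrier := Y
  E := fun _ _ => True
  total := fun _ => P.nonemptyCarrier.elim fun a => ⟨a, trivial⟩

/-- The functor `∇ : Set ⥤ Asm(A,φ)`. -/
def Nab (P : PCA A) : Type ⥤ Asm P where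
  obj Y := nablaObj P Y
  map {Y Z} f := ⟨f, by
    obtain ⟨U, hU, hI⟩ := exists_ireal P
    exact ⟨U, hU, fun y a r _ hr => ⟨a, hI r hr a, trivial⟩⟩⟩
  map_id _ := Subtype.ext rfl
  map_comp _ _ := Subtype.ext rfl

/- ### Applicative morphisms -/

/-- The image of a subset under a relation. -/
def relImage (f : A → B → Prop) (V : Set A) : Set B :=
  {b | ∃ a ∈ V, f a b}

/-- `U` tracks the relation `f` as an applicative (pre)morphism. -/
def Tracks₂ (appA : PApp A) (appB : PApp B) (U : Set B) (f : A → B → Prop) : Prop :=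
  ∀ a a' c, appA a a' = some c → ∀ b b', f a b → f a' b' → ∀ r ∈ U,
    ∃ d e, appB r b = some d ∧ appB d b' = some e ∧ f c e

/-- `f ⊆ A × B` is an applicative morphism `(A,φ) → (B,ψ)`. -/
structure IsAppMor (appA : PApp A) (φ : Set (Set A)) (appB : PApp B) (ψ : Set (Set B))
    (f : A → B → Prop) : Prop where
  total : ∀ a, ∃ b, f a b
  tracked : ∃ U ∈ ψ, Tracks₂ appA appB U f
  image : ∀ V ∈ φ, relImage f V ∈ ψ

/-- The preorder `f ≤ f'` on relations `A × B`, relative to `(B,ψ)`. -/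
def RelLe (appB : PApp B) (ψ : Set (Set B)) (f f' : A → B → Prop) : Prop :=
  ∃ U ∈ ψ, ∀ a b, f a b → ∀ r ∈ U, ∃ c, appB r b = some c ∧ f' a c

/-- Relational composition: `(RelComp g f) a c ↔ ∃ b, f a b ∧ g b c`. -/
def RelComp (g : B → C → Prop) (f : A → B → Prop) : A → C → Prop :=
  fun a c => ∃ b, f a b ∧ g b c

/-- The diagonal (identity) relation `δ_A`. -/
def relId (A : Type) : A → A → Prop := fun a b => a = b

/- ### The functor Asm(f) induced by an applicative morphism -/

/-- The action of an applicative morphism on an assembly. -/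
def asmObj (P : PCA A) (Q : PCA B) (f : A → B → Prop) (htot : ∀ a, ∃ b, f a b)
    (X : Asm P) : Asm Q where
  carrier := X.carrier
  E := fun x b => ∃ a, X.E x a ∧ f a b
  total := fun x => by
    obtain ⟨a, ha⟩ := X.total x
    obtain ⟨b, hb⟩ := htot a
    exact ⟨b, a, ha, hb⟩

lemma tracks_asmMap {P : PCA A} {Q : PCA B} {f : A → B → Prop}
    (hf : IsAppMor P.app P.filt Q.app Q.filt f) {X Y : Asm P}
    (g : X.carrier → Y.carrier) (hg : ∃ U ∈ P.filt, Tracks P U g) :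
    ∃ W ∈ Q.filt,
      Tracks Q (X := asmObj P Q f hf.total X) (Y := asmObj P Q f hf.total Y) W g := by
  obtain ⟨U, hU, hgU⟩ := hg
  obtain ⟨T, hT, hfT⟩ := hf.tracked
  have hfU : relImage f U ∈ Q.filt := hf.image U hU
  obtain ⟨W, hW, hkey⟩ := exists_tracker3 Q
    (Term.op (.op (.var 0) (.var 1)) (.var 2)) hT hfU
  refine ⟨W, hW, ?_⟩
  rintro x b w ⟨a, hxa, hab⟩ hw
  obtain ⟨v, hv, y, hy, key⟩ := hkey w hw
  obtain ⟨u, hu, huy⟩ := hy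
  obtain ⟨a', ha', hEa'⟩ := hgU x a u hxa hu
  obtain ⟨d, e, hd, he, hfe⟩ := hfT u a a' ha' y b huy hab v hv
  refine ⟨e, key b e ?_, a', hEa', hfe⟩
  rw [eval_app2_term, hd]
  simpa using he

/-- The functor `Asm(f) : Asm(A,φ) ⥤ Asm(B,ψ)` induced by an applicative morphism. -/
def asmFunctor {P : PCA A} {Q : PCA B} {f : A → B → Prop}
    (hf : IsAppMor P.app P.filt Q.app Q.filt f) : Asm P ⥤ Asm Q where
  obj X := asmObj P Q f hf.total X
  map {X Y} g := ⟨g.1, tracks_asmMap hf g.1 g.2⟩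
  map_id _ := Subtype.ext rfl
  map_comp _ _ := Subtype.ext rfl
/- ### Products of PASs -/

/-- Coordinatewise partial application on `A × B`. -/
def prodApp (appA : PApp A) (appB : PApp B) : PApp (A × B) := fun p q =>
  (appA p.1 q.1).bind fun x => (appB p.2 q.2).bind fun y => some (x, y)

/-- The set `φ × ψ` of rectangles `U ×ˢ V` with `U ∈ φ` and `V ∈ ψ`. -/
def prodFiltSet (φ : Set (Set A)) (ψ : Set (Set B)) : Set (Set (A × B)) :=
  {W | ∃ U ∈ φ, ∃ V ∈ ψ, W = U ×ˢ V}

/-- The filter `⟨φ × ψ⟩` of the pseudocoproduct of two PCAs. -/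
def prodFilt (P : PCA A) (Q : PCA B) : Set (Set (A × B)) :=
  genFilter (prodApp P.app Q.app) (prodFiltSet P.filt Q.filt)

/- ### Quasi-surjectivity and computational density -/

/-- A quasi-surjective applicative morphism. -/
def QuasiSurjective (P : PCA A) (Q : PCA B) (f : A → B → Prop) : Prop :=
  ∃ N ∈ Q.filt, ∀ U ∈ Q.filt, ∃ V ∈ P.filt,
    ∀ n ∈ N, ∀ b ∈ relImage f V, ∃ c, Q.app n b = some c ∧ c ∈ U

/-- A computationally dense applicative morphism. -/
def CompDense (P : PCA A) (Q : PCA B) (f : A → B → Prop) : Prop :=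
  ∃ M ∈ Q.filt, ∀ U ∈ Q.filt, ∃ V ∈ P.filt,
    (∀ r ∈ V, ∀ a : A, (P.app r a).isSome) ∧
    (∀ r ∈ V, ∀ a a', P.app r a = some a' →
      (∀ u ∈ U, ∀ b, f a b → (Q.app u b).isSome) →
      ∀ m ∈ M, ∀ b', f a' b' →
        ∃ c, Q.app m b' = some c ∧ ∃ u ∈ U, ∃ b'', f a b'' ∧ Q.app u b'' = some c)

/- ### Slicing: fiberwise filters over an assembly -/

/-- Fiberwise definedness of the application of two subsets of `I × A`. -/
def fibSubDef (app : PApp A) {I : Type} (U V : Set (I × A)) : Prop :=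
  ∀ i r s, (i, r) ∈ U → (i, s) ∈ V → (app r s).isSome

/-- Fiberwise application of two subsets of `I × A`. -/
def fibSubApp (app : PApp A) {I : Type} (U V : Set (I × A)) : Set (I × A) :=
  {p | ∃ r s, (p.1, r) ∈ U ∧ (p.1, s) ∈ V ∧ app r s = some p.2}

/-- A fiberwise filter over `I`. -/
structure IsFibFilter (app : PApp A) (I : Type) (Ψ : Set (Set (I × A))) : Prop where
  inhab : ∀ U ∈ Ψ, ∀ i : I, ∃ a, (i, a) ∈ U
  upward : ∀ U ∈ Ψ, ∀ V : Set (I × A), U ⊆ V → V ∈ Ψ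
  appClosed : ∀ U ∈ Ψ, ∀ V ∈ Ψ, fibSubDef app U V → fibSubApp app U V ∈ Ψ

/-- The filter `φ_I` of the slice PCA over an assembly `I`: the least fiberwise filter
containing `E_I` and all sets `|I| × V` for `V ∈ φ`. -/
def sliceFilt (P : PCA A) (I : Asm P) : Set (Set (I.carrier × A)) :=
  ⋂₀ {Ψ | IsFibFilter P.app I.carrier Ψ ∧ {p : I.carrier × A | I.E p.1 p.2} ∈ Ψ ∧
      ∀ V ∈ P.filt, {p : I.carrier × A | p.2 ∈ V} ∈ Ψ}

lemma sliceFilt_upward {P : PCA A} {I : Asm P} {U V : Set (I.carrier × A)}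
    (hU : U ∈ sliceFilt P I) (hUV : U ⊆ V) : V ∈ sliceFilt P I := by
  rw [sliceFilt, Set.mem_sInter] at hU ⊢
  intro Ψ hΨ
  exact hΨ.1.upward U (hU Ψ hΨ) V hUV

lemma sliceFilt_appClosed {P : PCA A} {I : Asm P} {U V : Set (I.carrier × A)}
    (hU : U ∈ sliceFilt P I) (hV : V ∈ sliceFilt P I) (hdef : fibSubDef P.app U V) :
    fibSubApp P.app U V ∈ sliceFilt P I := by
  rw [sliceFilt, Set.mem_sInter] at hU hV ⊢
  intro Ψ hΨ
  exact hΨ.1.appClosed U (hU Ψ hΨ) V (hV Ψ hΨ) hdef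

lemma base_mem_sliceFilt {P : PCA A} {I : Asm P} {V : Set A} (hV : V ∈ P.filt) :
    {p : I.carrier × A | p.2 ∈ V} ∈ sliceFilt P I := by
  rw [sliceFilt, Set.mem_sInter]
  intro Ψ hΨ
  exact hΨ.2.2 V hV

lemma EI_mem_sliceFilt (P : PCA A) (I : Asm P) :
    {p : I.carrier × A | I.E p.1 p.2} ∈ sliceFilt P I := by
  rw [sliceFilt, Set.mem_sInter]
  intro Ψ hΨ
  exact hΨ.2.1

lemma exists_fib_tracker3 (P : PCA A) (I : Asm P) (t : Term (2 + 1))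
    {U V : Set (I.carrier × A)} (hU : U ∈ sliceFilt P I) (hV : V ∈ sliceFilt P I) :
    ∃ W ∈ sliceFilt P I, ∀ i w, (i, w) ∈ W → ∃ u v, (i, u) ∈ U ∧ (i, v) ∈ V ∧
      ∀ x c : A, Term.eval P.app t ![u, v, x] = some c → P.app w x = some c := by
  obtain ⟨T, hT, hreal⟩ := P.complete 2 t
  have hT' : {p : I.carrier × A | p.2 ∈ T} ∈ sliceFilt P I := base_mem_sliceFilt hT
  have hdef1 : fibSubDef P.app {p : I.carrier × A | p.2 ∈ T} U := by
    intro i r s hr _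
    obtain ⟨s', w', h1, -⟩ := realizes3_chain P hreal hr s s
    simp [h1]
  have h1mem := sliceFilt_appClosed hT' hU hdef1
  have hdef2 : fibSubDef P.app (fibSubApp P.app {p : I.carrier × A | p.2 ∈ T} U) V := by
    rintro i s v ⟨r, u, hr, hu, hru⟩ _
    obtain ⟨s', w', hs', hw'⟩ := realizes3_chain P hreal hr u v
    rw [hru] at hs'
    injection hs' with h
    subst h
    simp [hw']
  refine ⟨_, sliceFilt_appClosed h1mem hV hdef2, ?_⟩
  rintro i w ⟨s, v, ⟨r, u, hr, hu, hru⟩, hv, hsv⟩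
  refine ⟨u, v, hu, hv, fun x c hc => ?_⟩
  have h2 : appVec P.app r (2 + 1) ![u, v, x] = some c := (hreal r hr ![u, v, x]).2 c hc
  rw [appVec_three_cons, hru] at h2
  simp only [Option.bind_some] at h2
  rw [hsv] at h2
  simpa using h2

/- ### The category of assemblies over the slice PCA `(A,φ)/I` -/

/-- Assemblies over the slice PCA `(A,φ)/I`. -/
structure SliceAsm (P : PCA A) (I : Asm P) : Type 1 where
  carrier : Type
  k : carrier → I.carrier
  E : carrier → A → Prop
  total : ∀ x, ∃ a, E x a

/-- Fiberwise tracking for morphisms of assemblies over `(A,φ)/I`. -/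
def SliceTracks (P : PCA A) (I : Asm P) {X Y : SliceAsm P I} (U : Set (I.carrier × A))
    (f : X.carrier → Y.carrier) : Prop :=
  ∀ x a r, X.E x a → (X.k x, r) ∈ U → ∃ b, P.app r a = some b ∧ Y.E (f x) b

instance sliceAsmCategory (P : PCA A) (I : Asm P) : Category (SliceAsm P I) where
  Hom X Y := {f : X.carrier → Y.carrier //
    (∀ x, Y.k (f x) = X.k x) ∧ ∃ U ∈ sliceFilt P I, SliceTracks P I U f}
  id X := ⟨fun x => x, fun _ => rfl, by
    obtain ⟨U, hU, hI⟩ := exists_ireal P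
    exact ⟨{p | p.2 ∈ U}, base_mem_sliceFilt hU,
      fun x a r hx hr => ⟨a, hI r hr a, hx⟩⟩⟩
  comp {X Y Z} f g := ⟨fun x => g.1 (f.1 x), fun x => (g.2.1 (f.1 x)).trans (f.2.1 x), by
    obtain ⟨U, hU, hf⟩ := f.2.2
    obtain ⟨V, hV, hg⟩ := g.2.2
    obtain ⟨W, hW, hkey⟩ := exists_fib_tracker3 P I
      (Term.op (.var 1) (.op (.var 0) (.var 2))) hU hV
    refine ⟨W, hW, fun x a w hx hw => ?_⟩
    obtain ⟨u, v, hu, hv, key⟩ := hkey (X.k x) w hw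
    obtain ⟨b, hb, hYb⟩ := hf x a u hx hu
    have hv' : (Y.k (f.1 x), v) ∈ V := by rw [f.2.1 x]; exact hv
    obtain ⟨c, hc, hZc⟩ := hg (f.1 x) b v hYb hv'
    refine ⟨c, key a c ?_, hZc⟩
    rw [eval_comp_term, hb]
    simpa using hc⟩
  id_comp f := Subtype.ext rfl
  comp_id f := Subtype.ext rfl
  assoc f g h := Subtype.ext rfl

/- ### Families of assemblies (products of PCAs) -/

/-- The category of families of assemblies over a family of PCAs, with uniformly
tracked families of morphisms; this is the category of assemblies over the product
PCA of the family, taken over the product of the base categories. -/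
structure FamAsm {I : Type} {A : I → Type} (P : ∀ i, PCA (A i)) : Type 1 where
  obj : ∀ i, Asm (P i)

instance famAsmCategory {I : Type} {A : I → Type} (P : ∀ i, PCA (A i)) :
    Category (FamAsm P) where
  Hom X Y := {f : ∀ i, (X.obj i).carrier → (Y.obj i).carrier //
    ∃ U : ∀ i, Set (A i), (∀ i, U i ∈ (P i).filt) ∧ ∀ i, Tracks (P i) (U i) (f i)}
  id X := ⟨fun i x => x, by
    choose U hU using fun i => exists_ireal (P i)
    exact ⟨U, fun i => (hU i).1, fun i x a r hx hr => ⟨a, (hU i).2 r hr a, hx⟩⟩⟩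
  comp {X Y Z} f g := ⟨fun i x => g.1 i (f.1 i x), by
    obtain ⟨U, hU, hf⟩ := f.2
    obtain ⟨V, hV, hg⟩ := g.2
    choose W hW using fun i => exists_tracker3 (P i)
      (Term.op (.var 1) (.op (.var 0) (.var 2))) (hU i) (hV i)
    refine ⟨W, fun i => (hW i).1, fun i x a w hx hw => ?_⟩
    obtain ⟨u, hu, v, hv, key⟩ := (hW i).2 w hw
    obtain ⟨b, hb, hYb⟩ := hf i x a u hx hu
    obtain ⟨c, hc, hZc⟩ := hg i (f.1 i x) b v hYb hv
    refine ⟨c, key a c ?_, hZc⟩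
    rw [eval_comp_term, hb]
    simpa using hc⟩
  id_comp f := Subtype.ext rfl
  comp_id f := Subtype.ext rfl
  assoc f g h := Subtype.ext rfl

/-! A computationally dense `f` is quasi-surjective with the same `M`: apply density to
a filter set of constant functions `λ _. u` with `u ∈ U`; whatever `m` returns is then a
value of such a function, so it lies in `U`.

Conversely, given `N`, let `r` send `a` to the pair `⟨v, a⟩`, with `v` drawn from the set
`V` that quasi-surjectivity provides for `U`. Applied to a code `b'` of `⟨v, a⟩` and to codes
of the projections, the tracker `t` of `f` yields codes `e ∈ f(v)` and `e' ∈ f(a)`, and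
`m b' := n e e'` lies in `U · f(a)` because `n e ∈ U`. -/

lemma appVec_snoc (app : PApp A) (r : A) (n : ℕ) (u : Fin n → A) (x : A) :
    appVec app r (n + 1) (Fin.snoc u x) = (appVec app r n u).bind fun s => app s x := by
  simp only [appVec, Fin.snoc_castSucc, Fin.snoc_last]

lemma Realizes.exists_appVec_eq {app : PApp A} {U : Set A} {n : ℕ} {t : Term (n + 1)}
    (h : Realizes app U t) {r : A} (hr : r ∈ U) (u : Fin n → A) :
    ∃ s, appVec app r n u = some s ∧
      ∀ x c, Term.eval app t (Fin.snoc u x) = some c → app s x = some c := by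
  have hdef := (h r hr (Fin.snoc u r)).1
  simp only [Fin.snoc_castSucc] at hdef
  obtain ⟨s, hs⟩ := Option.isSome_iff_exists.mp hdef
  refine ⟨s, hs, fun x c hc => ?_⟩
  simpa [appVec_snoc, hs] using (h r hr (Fin.snoc u x)).2 c hc

lemma PCA.setOf_appVec_mem_filt (P : PCA A) {T : Set A} (hT : T ∈ P.filt) :
    ∀ {k : ℕ} {U : Fin k → Set A}, (∀ i, U i ∈ P.filt) →
      (∀ r ∈ T, ∀ u : Fin k → A, (∀ i, u i ∈ U i) → (appVec P.app r k u).isSome) →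
      {w | ∃ r ∈ T, ∃ u : Fin k → A, (∀ i, u i ∈ U i) ∧ appVec P.app r k u = some w}
        ∈ P.filt
  | 0, U, _, _ =>
    P.isFilter.upward T hT _ fun r hr => ⟨r, hr, Fin.elim0, fun i => i.elim0, rfl⟩
  | k + 1, U, hU, hdef => by
    obtain ⟨x₀, hx₀⟩ := P.isFilter.nonempty _ (hU (Fin.last k))
    have hprefix := P.setOf_appVec_mem_filt hT (U := fun i => U i.castSucc)
      (fun i => hU _) fun r hr u hu => by
        have h := hdef r hr (Fin.snoc u x₀) (Fin.lastCases (by simpa) (by simpa))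
        rw [appVec_snoc] at h
        exact isSome_bind_left h
    refine P.isFilter.upward _ (P.isFilter.appClosed _ hprefix _ (hU (Fin.last k)) ?_) _ ?_
    · rintro s ⟨r, hr, u, hu, hs⟩ x hx
      have h := hdef r hr (Fin.snoc u x) (Fin.lastCases (by simpa) (by simpa))
      rwa [appVec_snoc, hs] at h
    · rintro c ⟨s, ⟨r, hr, u, hu, hs⟩, x, hx, hc⟩
      exact ⟨r, hr, Fin.snoc u x, Fin.lastCases (by simpa) (by simpa),
        by rw [appVec_snoc, hs]; exact hc⟩

/-- Instantiating all but the last variable of a term with elements of given filter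
sets yields a filter set of realizers of the remaining unary function. -/
lemma PCA.exists_curried_realizer (P : PCA A) {n : ℕ} (t : Term (n + 1))
    {U : Fin n → Set A} (hU : ∀ i, U i ∈ P.filt) :
    ∃ W ∈ P.filt, ∀ w ∈ W, ∃ u : Fin n → A, (∀ i, u i ∈ U i) ∧
      ∀ x c, Term.eval P.app t (Fin.snoc u x) = some c → P.app w x = some c := by
  obtain ⟨T, hT, hreal⟩ := P.complete n t
  refine ⟨_, P.setOf_appVec_mem_filt hT hU fun r hr u _ => ?_, ?_⟩
  · obtain ⟨s, hs, -⟩ := hreal.exists_appVec_eq hr u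
    simp [hs]
  · rintro w ⟨r, hr, u, hu, hw⟩
    obtain ⟨s, hs, hsu⟩ := hreal.exists_appVec_eq hr u
    rw [hw, Option.some_inj] at hs
    exact ⟨u, hu, hs ▸ hsu⟩

lemma PCA.exists_const_mem_filt (P : PCA A) {U : Set A} (hU : U ∈ P.filt) :
    ∃ W ∈ P.filt, ∀ w ∈ W, ∃ u ∈ U, ∀ x, P.app w x = some u := by
  obtain ⟨W, hW, hconst⟩ := P.exists_curried_realizer (.var 0 : Term 2) (U := ![U])
    (by simpa using hU)
  refine ⟨W, hW, fun w hw => ?_⟩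
  obtain ⟨u, hu, hwu⟩ := hconst w hw
  exact ⟨u 0, hu 0, fun x => hwu x _ (by simp [Term.eval])⟩

/-- Pairing `⟨v, a⟩ := λ z. z v a`, decoded by applying it to the projections
`λ x y. x ∈ π₁` and `λ x y. y ∈ π₂`; the first component is drawn from `V`. -/
lemma PCA.exists_pairing (P : PCA A) :
    ∃ π₁ ∈ P.filt, ∃ π₂ ∈ P.filt, ∀ V ∈ P.filt, ∃ W ∈ P.filt, ∀ w ∈ W, ∃ v ∈ V, ∀ a,
      ∃ c, P.app w a = some c ∧ (∀ k ∈ π₁, P.app c k = some v) ∧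
        ∀ k ∈ π₂, P.app c k = some a := by
  obtain ⟨π₁, hπ₁, hreal₁⟩ := P.complete 1 (.var 0)
  obtain ⟨π₂, hπ₂, hreal₂⟩ := P.complete 1 (.var 1)
  obtain ⟨Pair, hPair, hrealPair⟩ := P.complete 2 (.op (.op (.var 2) (.var 0)) (.var 1))
  have hproj {π : Set A} {i : Fin 2} (hreal : Realizes P.app π (.var i)) {k : A}
      (hk : k ∈ π) (v a : A) : ((P.app k v).bind fun s => P.app s a) = some (![v, a] i) := by
    obtain ⟨s, hs, hsa⟩ := hreal.exists_appVec_eq hk ![v]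
    rw [show P.app k v = some s from hs, Option.bind_some]
    exact hsa a _ (by fin_cases i <;> simp [Term.eval])
  have hpair : ∀ p ∈ Pair, ∀ v a, ∃ c, ((P.app p v).bind fun s => P.app s a) = some c ∧
      (∀ k ∈ π₁, P.app c k = some v) ∧ ∀ k ∈ π₂, P.app c k = some a := by
    intro p hp v a
    obtain ⟨c, hc, hck⟩ := hrealPair.exists_appVec_eq hp ![v, a]
    refine ⟨c, hc, fun k hk => hck k v ?_, fun k hk => hck k a ?_⟩
    · simpa [Term.eval, Fin.snoc] using hproj hreal₁ hk v a
    · simpa [Term.eval, Fin.snoc] using hproj hreal₂ hk v a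
  refine ⟨π₁, hπ₁, π₂, hπ₂, fun V hV => ?_⟩
  obtain ⟨W, hW, hWreal⟩ := P.exists_curried_realizer (.op (.op (.var 0) (.var 1)) (.var 2))
    (U := ![Pair, V]) (Fin.forall_fin_two.mpr ⟨hPair, hV⟩)
  refine ⟨W, hW, fun w hw => ?_⟩
  obtain ⟨u, hu, hwu⟩ := hWreal w hw
  refine ⟨u 1, hu 1, fun a => ?_⟩
  obtain ⟨c, hc, hcπ⟩ := hpair (u 0) (hu 0) (u 1) a
  exact ⟨c, hwu a c (by simpa [Term.eval, Fin.snoc] using hc), hcπ⟩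

section

variable {P : PCA A} {Q : PCA B} {f : A → B → Prop}

theorem CompDense.quasiSurjective (hd : CompDense P Q f) : QuasiSurjective P Q f := by
  obtain ⟨M, hM, hdense⟩ := hd
  refine ⟨M, hM, fun U hU => ?_⟩
  obtain ⟨U', hU', hconst⟩ := Q.exists_const_mem_filt hU
  obtain ⟨V, hV, htotal, hV'⟩ := hdense U' hU'
  refine ⟨SubApp P.app V Set.univ,
    P.isFilter.appClosed V hV _ (univ_mem_filt P) fun r hr a _ => htotal r hr a, ?_⟩
  rintro m hm b ⟨a', ⟨r, hr, a, -, hra⟩, hb⟩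
  have hdef : ∀ u' ∈ U', ∀ b, f a b → (Q.app u' b).isSome := fun u' hu' b _ => by
    obtain ⟨u, -, hu'⟩ := hconst u' hu'
    simp [hu']
  obtain ⟨c, hmc, u', hu', b'', -, hc⟩ := hV' r hr a a' hra hdef m hm b hb
  obtain ⟨u, hu, hu'⟩ := hconst u' hu'
  rw [hu' b'', Option.some_inj] at hc
  exact ⟨c, hmc, hc ▸ hu⟩

theorem QuasiSurjective.compDense (hq : QuasiSurjective P Q f)
    (hf : IsAppMor P.app P.filt Q.app Q.filt f) : CompDense P Q f := by
  obtain ⟨N, hN, hqs⟩ := hq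
  obtain ⟨T, hT, htrack⟩ := hf.tracked
  obtain ⟨π₁, hπ₁, π₂, hπ₂, hpairs⟩ := P.exists_pairing
  -- `m e = n (t e x) (t e y)` with `n ∈ N`, `t ∈ T`, `x ∈ f(π₁)`, `y ∈ f(π₂)`
  obtain ⟨M, hM, hMreal⟩ := Q.exists_curried_realizer
    (.op (.op (.var 0) (.op (.op (.var 1) (.var 4)) (.var 2)))
      (.op (.op (.var 1) (.var 4)) (.var 3)))
    (U := ![N, T, relImage f π₁, relImage f π₂])
    (by simp [Fin.forall_fin_succ, hN, hT, hf.image _ hπ₁, hf.image _ hπ₂])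
  refine ⟨M, hM, fun U hU => ?_⟩
  obtain ⟨V, hV, hVU⟩ := hqs U hU
  obtain ⟨W, hW, hWpair⟩ := hpairs V hV
  refine ⟨W, hW, fun w hw a => ?_, fun w hw a a' hwa hdef m hm b' hb' => ?_⟩
  · obtain ⟨v, -, hpair⟩ := hWpair w hw
    obtain ⟨c, hc, -⟩ := hpair a
    simp [hc]
  obtain ⟨v, hv, hpair⟩ := hWpair w hw
  obtain ⟨c, hc, hc₁, hc₂⟩ := hpair a
  rw [hwa, Option.some_inj] at hc
  subst hc
  obtain ⟨u, hu, hmu⟩ := hMreal m hm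
  obtain ⟨k₁, hk₁, hx⟩ := hu 2
  obtain ⟨k₂, hk₂, hy⟩ := hu 3
  obtain ⟨d, e, hd, he, hfe⟩ := htrack a' k₁ v (hc₁ k₁ hk₁) b' (u 2) hb' hx (u 1) (hu 1)
  obtain ⟨d', e', hd', he', hfe'⟩ := htrack a' k₂ a (hc₂ k₂ hk₂) b' (u 3) hb' hy (u 1) (hu 1)
  rw [hd, Option.some_inj] at hd'
  subst hd'
  obtain ⟨g, hg, hgU⟩ := hVU (u 0) (hu 0) e ⟨v, hv, hfe⟩
  obtain ⟨c, hc⟩ := Option.isSome_iff_exists.mp (hdef g hgU e' hfe')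
  refine ⟨c, hmu b' c ?_, g, hgU, e', hfe', hc⟩
  simp [Term.eval, Fin.snoc, Fin.castPred, Fin.castLT, hd, he, hg, he', hc]

end

/-- An applicative morphism `f : (A,φ) → (B,ψ)` of PCAs over `Set` is
computationally dense iff it is quasi-surjective. -/
theorem statement17 (A B : Type) (P : PCA A) (Q : PCA B) (f : A → B → Prop)
    (hf : IsAppMor P.app P.filt Q.app Q.filt f) :
    CompDense P Q f ↔ QuasiSurjective P Q f :=
  ⟨CompDense.quasiSurjective, fun hq => hq.compDense hf⟩

end PcaPaper
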